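/- For A > 0, there exists a positive integer j with π/(j+1) ≤ π/(2A) and π/(√3·A) ≤ π/j, or 0 < A ≤ 1/2, if and only if A ∈ A_c := (0,1/2] ∪ ⋃_{k=1}^{6}[k/√3, (k+1)/2]. -/

import Mathlib

open Set Real

noncomputable def Ac : Set ℝ :=
  Ioc 0 (1 / 2) ∪ ⋃ k ∈ Finset.Icc (1 : ℕ) 6, Icc ((k : ℝ) / Real.sqrt 3) (((k : ℝ) + 1) / 2)

/-! The two inequalities between quotients of `π` say exactly that `A ∈ [j/√3, (j+1)/2]`. This
interval is nonempty iff `4j² ≤ 3(j+1)²`, i.e. iff `j ≤ 6`. -/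

lemma pi_div_bounds_iff_mem_Icc {A x : ℝ} (hA : 0 < A) (hx : 0 < x) :
    (π / (x + 1) ≤ π / (2 * A) ∧ π / (√3 * A) ≤ π / x) ↔ A ∈ Icc (x / √3) ((x + 1) / 2) := by
  have hs : 0 < √3 := by positivity
  rw [div_le_div_iff_of_pos_left pi_pos (by positivity) (by positivity),
    div_le_div_iff_of_pos_left pi_pos (by positivity) hx, mem_Icc, div_le_iff₀ hs,
    le_div_iff₀ two_pos, mul_comm A, mul_comm A, and_comm]

lemma le_six_of_div_sqrt_three_le {j : ℕ} (h : (j : ℝ) / √3 ≤ (j + 1) / 2) : j ≤ 6 := by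
  have hlin : 2 * (j : ℝ) ≤ √3 * (j + 1) := by
    rw [div_le_iff₀ (by positivity)] at h
    linarith
  have hsq : 4 * j ^ 2 ≤ 3 * (j + 1) ^ 2 := by
    have := pow_le_pow_left₀ (by positivity) hlin 2
    rw [mul_pow, mul_pow, sq_sqrt zero_le_three] at this
    exact_mod_cast (by linarith : (4 : ℝ) * j ^ 2 ≤ 3 * (j + 1) ^ 2)
  nlinarith

/-- For `A > 0`: there is a positive integer `j` with `π/(j+1) ≤ π/(2A)` and
`π/(√3 A) ≤ π/j`, or `0 < A ≤ 1/2`, if and only if `A ∈ A_c`. -/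
theorem stmt11 (A : ℝ) (hA : 0 < A) :
    ((∃ j : ℕ, 1 ≤ j ∧ π / ((j : ℝ) + 1) ≤ π / (2 * A) ∧
        π / (Real.sqrt 3 * A) ≤ π / (j : ℝ)) ∨ A ≤ 1 / 2) ↔ A ∈ Ac := by
  simp only [Ac, mem_union, mem_Ioc, hA, true_and, mem_iUnion₂, Finset.mem_Icc, exists_prop]
  refine or_comm.trans (or_congr_right ⟨?_, ?_⟩)
  · rintro ⟨j, hj, hbounds⟩
    have hmem := (pi_div_bounds_iff_mem_Icc hA (Nat.cast_pos.2 hj)).1 hbounds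
    exact ⟨j, ⟨hj, le_six_of_div_sqrt_three_le (hmem.1.trans hmem.2)⟩, hmem⟩
  · rintro ⟨k, ⟨hk, -⟩, hmem⟩
    exact ⟨k, hk, (pi_div_bounds_iff_mem_Icc hA (Nat.cast_pos.2 hk)).2 hmem⟩
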